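/- Let C₀ ≥ 0, let T : ℝ → ℂ be differentiable with |T(k)| ≤ 1 for all k ∈ ℝ and |T(k)/k| + ⟨k⟩ |(d/dk)(T(k)/k)| ≤ C₀⟨k⟩^{−1} for all k ≠ 0, and let m : ℝ × ℝ → ℂ be continuous and differentiable in its second variable, with |m(x,k) − 1| ≤ C₀⟨x⟩⟨k⟩^{−1} and |∂_k m(x,k)| ≤ C₀⟨x⟩²⟨k⟩^{−1} for all x, k ∈ ℝ. Then there exists C depending only on C₀ such that for every differentiable g : ℝ → ℂ with g, g' ∈ L²(ℝ) and g(0) = 0, every t ≥ 0, and every x ∈ ℝ, | ∫₀^∞ ⟨k⟩^{−1} T(k) m(x,k) e^{ikx} e^{it⟨k⟩} g(k) dk | ≤ C ⟨x⟩² ⟨t⟩^{−1} ( ‖g‖_{L²} + ‖g'‖_{L²} ). -/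

import Mathlib

open MeasureTheory

/-- Japanese bracket `⟨x⟩ = √(1+x²)`. -/
noncomputable def jb (x : ℝ) : ℝ := Real.sqrt (1 + x ^ 2)

/-!
For `t ≤ 1` the integral is bounded directly: `|T m| ≲ ⟨x⟩`, and Cauchy–Schwarz
against `⟨k⟩⁻¹ ∈ L²` gives `‖g‖₂`. For `t ≥ 1` write
`⟨k⟩⁻¹ e^{it⟨k⟩} = (it)⁻¹ k⁻¹ ∂ₖ e^{it⟨k⟩}` and integrate by parts, moving the derivative
onto the amplitude `u = (T/k) · m e^{ikx} · g`. The hypotheses on `T/k` and `m` give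
`|u'| ≲ ⟨x⟩² ⟨k⟩⁻¹ (|g| + |g'|)`, again controlled by Cauchy–Schwarz, and the factor `t⁻¹`
is gained. The boundary terms vanish: at `k = 0` because `g(0) = 0`, at infinity because
`‖g‖` has a limit there (`(‖g‖²)' = 2⟨g, g'⟩` is integrable).
-/

open Filter Set Topology Real Complex

lemma jb_pos (x : ℝ) : 0 < jb x := Real.sqrt_pos.2 (by positivity)

lemma one_le_jb (x : ℝ) : 1 ≤ jb x := Real.one_le_sqrt.2 (by nlinarith [sq_nonneg x])

lemma sq_jb (x : ℝ) : jb x ^ 2 = 1 + x ^ 2 := Real.sq_sqrt (by positivity)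

lemma jb_le_sq_jb (x : ℝ) : jb x ≤ jb x ^ 2 := by nlinarith [one_le_jb x]

lemma abs_le_jb (x : ℝ) : |x| ≤ jb x := Real.abs_le_sqrt (by linarith)

@[fun_prop]
lemma continuous_jb : Continuous jb := by unfold jb; fun_prop

lemma hasDerivAt_jb (k : ℝ) : HasDerivAt jb (k / jb k) k := by
  have h := ((hasDerivAt_pow 2 k).const_add 1).sqrt (by positivity)
  exact h.congr_deriv (by unfold jb; push_cast; ring)

lemma tendsto_jb_atTop : Tendsto jb atTop atTop :=
  tendsto_atTop_mono (fun x => (le_abs_self x).trans (abs_le_jb x)) tendsto_id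

lemma jb_le_sqrt_two_mul_max {t : ℝ} (ht : 0 ≤ t) : jb t ≤ √2 * max 1 t := by
  have h1 : 0 ≤ max 1 t := le_max_of_le_left zero_le_one
  rw [jb, ← Real.sqrt_sq h1, ← Real.sqrt_mul zero_le_two]
  exact Real.sqrt_le_sqrt (by nlinarith [le_max_left 1 t, le_max_right 1 t])

lemma le_sqrt_two_mul_inv_jb {E K t : ℝ} (ht : 0 ≤ t) (hK : 0 ≤ K) (h₀ : E ≤ K)
    (h₁ : 1 ≤ t → E ≤ t⁻¹ * K) : E ≤ √2 * K * (jb t)⁻¹ := by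
  have hmax : E ≤ K / max 1 t := by
    rcases le_total t 1 with h | h
    · simpa [max_eq_left h] using h₀
    · simpa [max_eq_right h, div_eq_inv_mul] using h₁ h
  calc E ≤ K / max 1 t := hmax
    _ = √2 * K / (√2 * max 1 t) := (mul_div_mul_left _ _ (by positivity)).symm
    _ ≤ √2 * K / jb t :=
        div_le_div_of_nonneg_left (by positivity) (jb_pos t) (jb_le_sqrt_two_mul_max ht)
    _ = √2 * K * (jb t)⁻¹ := div_eq_mul_inv _ _

lemma memLp_inv_jb : MemLp (fun k => (jb k)⁻¹) 2 (volume : Measure ℝ) := by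
  refine (memLp_two_iff_integrable_sq
    (continuous_jb.inv₀ fun k => (jb_pos k).ne').aestronglyMeasurable).2 ?_
  simpa only [Pi.inv_apply, inv_pow, sq_jb] using integrable_inv_one_add_sq

lemma integrable_inv_jb_mul_norm {E : Type*} [NormedAddCommGroup E] {f : ℝ → E}
    (hf : MemLp f 2 volume) : Integrable (fun k => (jb k)⁻¹ * ‖f k‖) :=
  have : ENNReal.HolderTriple 2 2 1 := ⟨by simp [ENNReal.inv_two_add_inv_two]⟩
  memLp_inv_jb.integrable_mul hf.norm

lemma integral_inv_jb_mul_norm_le {E : Type*} [NormedAddCommGroup E] {f : ℝ → E}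
    (hf : MemLp f 2 volume) (s : Set ℝ) :
    ∫ k in s, (jb k)⁻¹ * ‖f k‖ ≤ √π * √(∫ k, ‖f k‖ ^ 2) := by
  have hCS := integral_mul_le_Lp_mul_Lq_of_nonneg Real.HolderConjugate.two_two
    (Eventually.of_forall fun k => (inv_pos.2 (jb_pos k)).le)
    (Eventually.of_forall fun k => norm_nonneg (f k))
    (by simpa using memLp_inv_jb) (by simpa using hf.norm)
  simp only [Real.rpow_two, inv_pow, sq_jb, integral_univ_inv_one_add_sq,
    ← Real.sqrt_eq_rpow] at hCS
  refine le_trans ?_ hCS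
  exact setIntegral_le_integral (integrable_inv_jb_mul_norm hf)
    (Eventually.of_forall fun k => mul_nonneg (inv_pos.2 (jb_pos k)).le (norm_nonneg _))

lemma tendsto_inv_jb_mul_norm_atTop {F : Type*} [NormedAddCommGroup F] [InnerProductSpace ℝ F]
    {g : ℝ → F} (hgd : Differentiable ℝ g) (hg : MemLp g 2 volume)
    (hg' : MemLp (deriv g) 2 volume) :
    Tendsto (fun k => (jb k)⁻¹ * ‖g k‖) atTop (𝓝 0) := by
  have : ENNReal.HolderTriple 2 2 1 := ⟨by simp [ENNReal.inv_two_add_inv_two]⟩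
  have hint : Integrable (fun k => 2 * inner ℝ (g k) (deriv g k)) :=
    ((hg.norm.integrable_mul hg'.norm).const_mul 2).mono
      ((hgd.continuous.aestronglyMeasurable.inner hg'.1).const_mul 2)
      (Eventually.of_forall fun k => by
        simpa [abs_mul] using mul_le_mul_of_nonneg_left (abs_real_inner_le_norm _ _) zero_le_two)
  have hsq := tendsto_limUnder_of_hasDerivAt_of_integrableOn_Ioi (a := 0)
    (fun k _ => (hgd k).hasDerivAt.norm_sq) hint.integrableOn
  have hnorm :
      Tendsto (fun k => ‖g k‖) atTop (𝓝 (√(limUnder atTop fun k => ‖g k‖ ^ 2))) := by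
    simpa only [Real.sqrt_sq (norm_nonneg _)] using hsq.sqrt
  simpa using ((tendsto_inv_atTop_zero.comp tendsto_jb_atTop).mul hnorm)

lemma norm_integral_Ioi_mul_deriv_mul_cexp_le {a t : ℝ} (ht : t ≠ 0) {u u' : ℝ → ℂ}
    {φ φ' : ℝ → ℝ} (hu : ∀ k ∈ Ioi a, HasDerivAt u (u' k) k)
    (hφ : ∀ k ∈ Ioi a, HasDerivAt φ (φ' k) k) (hu' : IntegrableOn u' (Ioi a))
    (huφ : IntegrableOn (fun k => u k * φ' k * cexp (I * t * φ k)) (Ioi a))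
    (hu_a : Tendsto u (𝓝[>] a) (𝓝 0)) (hu_top : Tendsto u atTop (𝓝 0)) :
    ‖∫ k in Ioi a, u k * φ' k * cexp (I * t * φ k)‖ ≤
      |t|⁻¹ * ∫ k in Ioi a, ‖u' k‖ := by
  set v : ℝ → ℂ := fun k => cexp (I * t * φ k) / (I * t)
  have htC : (t : ℂ) ≠ 0 := ofReal_ne_zero.2 ht
  have hnorm_v : ∀ k, ‖v k‖ = |t|⁻¹ := fun k => by simp [v, norm_exp]
  have hv : ∀ k ∈ Ioi a, HasDerivAt v (φ' k * cexp (I * t * φ k)) k := fun k hk => by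
    have h := (((hφ k hk).ofReal_comp.const_mul (I * t)).cexp).div_const (I * t)
    exact h.congr_deriv (by field_simp)
  have hv_meas : AEStronglyMeasurable v (volume.restrict (Ioi a)) :=
    ContinuousOn.aestronglyMeasurable (fun k hk => (hv k hk).continuousAt.continuousWithinAt)
      measurableSet_Ioi
  have huv_lim : ∀ {l : Filter ℝ}, Tendsto u l (𝓝 0) → Tendsto (u * v) l (𝓝 0) :=
      fun h => by
    refine squeeze_zero_norm (fun k => ?_) (by simpa using h.norm.mul_const |t|⁻¹)
    simp [hnorm_v]
  have hIBP := integral_Ioi_mul_deriv_eq_deriv_mul hu hv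
    (by simpa only [Pi.mul_def, mul_assoc] using huφ)
    (hu'.mul_bdd hv_meas (Eventually.of_forall fun k => (hnorm_v k).le))
    (huv_lim hu_a) (huv_lim hu_top)
  simp only [sub_zero, zero_sub, ← mul_assoc] at hIBP
  rw [hIBP, norm_neg, ← integral_const_mul]
  refine norm_integral_le_of_norm_le (hu'.norm.const_mul _) (Eventually.of_forall fun k => ?_)
  rw [norm_mul, hnorm_v, mul_comm]

lemma norm_deriv_mul_mul_le {𝔸 : Type*} [NormedRing 𝔸] [NormedAlgebra ℝ 𝔸]
    {a b c : ℝ → 𝔸} {k A B : ℝ} (ha : DifferentiableAt ℝ a k) (hb : DifferentiableAt ℝ b k)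
    (hc : DifferentiableAt ℝ c k) (ha_le : ‖a k‖ ≤ A) (ha'_le : ‖deriv a k‖ ≤ A)
    (hb_le : ‖b k‖ ≤ B) (hb'_le : ‖deriv b k‖ ≤ B) :
    ‖deriv (fun k => a k * b k * c k) k‖ ≤ A * B * (2 * ‖c k‖ + ‖deriv c k‖) := by
  have h : HasDerivAt (fun k => a k * b k * c k) _ k :=
    (ha.hasDerivAt.mul hb.hasDerivAt).mul hc.hasDerivAt
  rw [h.deriv]
  have hA : 0 ≤ A := (norm_nonneg _).trans ha_le
  have hB : 0 ≤ B := (norm_nonneg _).trans hb_le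
  calc _ ≤ ‖deriv a k‖ * ‖b k‖ * ‖c k‖ + ‖a k‖ * ‖deriv b k‖ * ‖c k‖
        + ‖a k‖ * ‖b k‖ * ‖deriv c k‖ := by
        rw [Pi.mul_apply, add_mul]
        refine norm_add₃_le.trans ?_
        gcongr <;> exact norm_mul₃_le
    _ ≤ A * B * ‖c k‖ + A * B * ‖c k‖ + A * B * ‖deriv c k‖ := by gcongr
    _ = A * B * (2 * ‖c k‖ + ‖deriv c k‖) := by ring

lemma norm_cexp_I_mul_mul (a b : ℝ) : ‖cexp (I * a * b)‖ = 1 := by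
  rw [mul_assoc, ← ofReal_mul, norm_exp_I_mul_ofReal]

lemma le_and_le_of_add_jb_mul_le {a b c k : ℝ} (ha : 0 ≤ a) (hb : 0 ≤ b)
    (h : a + jb k * b ≤ c) : a ≤ c ∧ b ≤ c :=
  ⟨by nlinarith [jb_pos k], by nlinarith [one_le_jb k]⟩

lemma norm_le_of_norm_sub_one_le {z : ℂ} {C₀ x k : ℝ} (hC₀ : 0 ≤ C₀)
    (h : ‖z - 1‖ ≤ C₀ * jb x / jb k) : ‖z‖ ≤ (C₀ + 1) * jb x := by
  have hdiv : C₀ * jb x / jb k ≤ C₀ * jb x :=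
    div_le_self (mul_nonneg hC₀ (jb_pos x).le) (one_le_jb k)
  calc ‖z‖ ≤ ‖z - 1‖ + 1 := by simpa using norm_le_norm_sub_add z 1
    _ ≤ (C₀ + 1) * jb x := by nlinarith [one_le_jb x]

lemma norm_mul_cexp_le {z : ℂ} {C₀ x k a : ℝ} (hC₀ : 0 ≤ C₀)
    (h : ‖z - 1‖ ≤ C₀ * jb x / jb k) :
    ‖z * cexp (I * a * x)‖ ≤ 2 * (C₀ + 1) * jb x ^ 2 := by
  rw [norm_mul, norm_cexp_I_mul_mul, mul_one]
  refine (norm_le_of_norm_sub_one_le hC₀ h).trans ?_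
  nlinarith [mul_le_mul_of_nonneg_left (jb_le_sq_jb x) (by linarith : 0 ≤ C₀ + 1)]

lemma norm_deriv_mul_cexp_le {μ : ℝ → ℂ} {C₀ x k : ℝ} (hC₀ : 0 ≤ C₀)
    (hμ : DifferentiableAt ℝ μ k) (hμ1 : ‖μ k - 1‖ ≤ C₀ * jb x / jb k)
    (hμ' : ‖deriv μ k‖ ≤ C₀ * jb x ^ 2 / jb k) :
    ‖deriv (fun k : ℝ => μ k * cexp (I * k * x)) k‖ ≤ 2 * (C₀ + 1) * jb x ^ 2 := by
  have hexp : HasDerivAt (fun k : ℝ => cexp (I * k * x)) (I * x * cexp (I * k * x)) k := by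
    have h := (((hasDerivAt_id k).ofReal_comp.const_mul I).mul_const (x : ℂ)).cexp
    exact h.congr_deriv (by simp only [id_eq, ofReal_one, mul_one]; ring)
  have h : HasDerivAt (fun k : ℝ => μ k * cexp (I * k * x)) _ k := hμ.hasDerivAt.mul hexp
  rw [h.deriv]
  have hμ'_le : ‖deriv μ k‖ ≤ C₀ * jb x ^ 2 :=
    hμ'.trans (div_le_self (by positivity) (one_le_jb k))
  have hμ_le := norm_le_of_norm_sub_one_le hC₀ hμ1
  calc _ ≤ ‖deriv μ k‖ + ‖μ k‖ * |x| := by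
        refine (norm_add_le _ _).trans_eq ?_
        simp [norm_cexp_I_mul_mul]
    _ ≤ C₀ * jb x ^ 2 + (C₀ + 1) * jb x * jb x := by
        gcongr
        · exact mul_nonneg (by linarith) (jb_pos x).le
        · exact abs_le_jb x
    _ ≤ 2 * (C₀ + 1) * jb x ^ 2 := by nlinarith [sq_nonneg (jb x)]

section Amplitude

variable {T μ g : ℝ → ℂ} {C₀ x k : ℝ}

lemma norm_amplitude_le (hC₀ : 0 ≤ C₀)
    (hTk : ‖T k / k‖ + jb k * ‖deriv (fun y : ℝ => T y / y) k‖ ≤ C₀ / jb k)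
    (hμ1 : ‖μ k - 1‖ ≤ C₀ * jb x / jb k) :
    ‖T k / k * (μ k * cexp (I * k * x)) * g k‖ ≤
      C₀ * (2 * (C₀ + 1) * jb x ^ 2) * ((jb k)⁻¹ * ‖g k‖) := by
  have hq := (le_and_le_of_add_jb_mul_le (norm_nonneg _) (norm_nonneg _) hTk).1
  calc _ ≤ ‖T k / k‖ * ‖μ k * cexp (I * k * x)‖ * ‖g k‖ := norm_mul₃_le
    _ ≤ C₀ / jb k * (2 * (C₀ + 1) * jb x ^ 2) * ‖g k‖ := by
        gcongr
        · exact (norm_nonneg _).trans hq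
        · exact norm_mul_cexp_le hC₀ hμ1
    _ = _ := by ring

lemma norm_deriv_amplitude_le (hC₀ : 0 ≤ C₀) (hk : k ≠ 0) (hTd : DifferentiableAt ℝ T k)
    (hTk : ‖T k / k‖ + jb k * ‖deriv (fun y : ℝ => T y / y) k‖ ≤ C₀ / jb k)
    (hμd : DifferentiableAt ℝ μ k) (hμ1 : ‖μ k - 1‖ ≤ C₀ * jb x / jb k)
    (hμ' : ‖deriv μ k‖ ≤ C₀ * jb x ^ 2 / jb k) (hgd : DifferentiableAt ℝ g k) :
    ‖deriv (fun k : ℝ => T k / k * (μ k * cexp (I * k * x)) * g k) k‖ ≤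
      C₀ * (2 * (C₀ + 1) * jb x ^ 2) *
        (2 * ((jb k)⁻¹ * ‖g k‖) + (jb k)⁻¹ * ‖deriv g k‖) := by
  obtain ⟨hq, hq'⟩ := le_and_le_of_add_jb_mul_le (norm_nonneg _) (norm_nonneg _) hTk
  have hqd : DifferentiableAt ℝ (fun y : ℝ => T y / y) k :=
    hTd.div ofRealCLM.differentiableAt (ofReal_ne_zero.2 hk)
  have hbd : DifferentiableAt ℝ (fun y : ℝ => μ y * cexp (I * y * x)) k := by fun_prop
  refine (norm_deriv_mul_mul_le hqd hbd hgd hq hq' (norm_mul_cexp_le hC₀ hμ1)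
    (norm_deriv_mul_cexp_le hC₀ hμd hμ1 hμ')).trans_eq ?_
  ring

lemma integrableOn_amplitude_mul_cexp (hC₀ : 0 ≤ C₀) (hTd : Continuous T)
    (hTk : ∀ k : ℝ, k ≠ 0 →
      ‖T k / k‖ + jb k * ‖deriv (fun y : ℝ => T y / y) k‖ ≤ C₀ / jb k)
    (hμd : Continuous μ) (hμ1 : ∀ k, ‖μ k - 1‖ ≤ C₀ * jb x / jb k)
    (hgd : Continuous g) (hg : MemLp g 2 volume) (t : ℝ) :
    IntegrableOn (fun k : ℝ => T k / k * (μ k * cexp (I * k * x)) * g k * (k / jb k : ℝ) *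
      cexp (I * t * jb k)) (Ioi 0) := by
  have hq : ContinuousOn (fun k : ℝ => T k / k) (Ioi 0) :=
    hTd.continuousOn.div continuous_ofReal.continuousOn fun k hk => ofReal_ne_zero.2 (ne_of_gt hk)
  refine ((integrable_inv_jb_mul_norm hg).const_mul
    (C₀ * (2 * (C₀ + 1) * jb x ^ 2))).integrableOn.mono'
    (ContinuousOn.aestronglyMeasurable ?_ measurableSet_Ioi)
    ((ae_restrict_iff' measurableSet_Ioi).2 (Eventually.of_forall fun k hk => ?_))
  · exact (((hq.mul (by fun_prop)).mul hgd.continuousOn).mul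
      (Continuous.continuousOn (by fun_prop (disch := exact fun k => (jb_pos k).ne')))).mul
      (Continuous.continuousOn (by fun_prop))
  calc _ = ‖T k / k * (μ k * cexp (I * k * x)) * g k‖ * (|k| / jb k) := by
        rw [norm_mul, norm_cexp_I_mul_mul, mul_one, norm_mul _ ((k / jb k : ℝ) : ℂ), norm_real,
          Real.norm_eq_abs, abs_div, abs_of_pos (jb_pos k)]
    _ ≤ ‖T k / k * (μ k * cexp (I * k * x)) * g k‖ :=
        mul_le_of_le_one_right (norm_nonneg _) ((div_le_one (jb_pos k)).2 (abs_le_jb k))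
    _ ≤ _ := norm_amplitude_le hC₀ (hTk k (ne_of_gt hk)) (hμ1 k)

lemma integrableOn_deriv_amplitude (hC₀ : 0 ≤ C₀) (hTd : Differentiable ℝ T)
    (hTk : ∀ k : ℝ, k ≠ 0 →
      ‖T k / k‖ + jb k * ‖deriv (fun y : ℝ => T y / y) k‖ ≤ C₀ / jb k)
    (hμd : Differentiable ℝ μ) (hμ1 : ∀ k, ‖μ k - 1‖ ≤ C₀ * jb x / jb k)
    (hμ' : ∀ k, ‖deriv μ k‖ ≤ C₀ * jb x ^ 2 / jb k) (hgd : Differentiable ℝ g)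
    (hg : MemLp g 2 volume) (hg' : MemLp (deriv g) 2 volume) :
    IntegrableOn (deriv fun k : ℝ => T k / k * (μ k * cexp (I * k * x)) * g k) (Ioi 0) :=
  ((((integrable_inv_jb_mul_norm hg).const_mul 2).add
    (integrable_inv_jb_mul_norm hg')).const_mul _).integrableOn.mono'
    (measurable_deriv _).aestronglyMeasurable
    ((ae_restrict_iff' measurableSet_Ioi).2 (Eventually.of_forall fun k hk =>
      norm_deriv_amplitude_le hC₀ (ne_of_gt hk) (hTd k) (hTk k (ne_of_gt hk)) (hμd k) (hμ1 k)
        (hμ' k) (hgd k)))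

lemma integral_norm_deriv_amplitude_le (hC₀ : 0 ≤ C₀) (hTd : Differentiable ℝ T)
    (hTk : ∀ k : ℝ, k ≠ 0 →
      ‖T k / k‖ + jb k * ‖deriv (fun y : ℝ => T y / y) k‖ ≤ C₀ / jb k)
    (hμd : Differentiable ℝ μ) (hμ1 : ∀ k, ‖μ k - 1‖ ≤ C₀ * jb x / jb k)
    (hμ' : ∀ k, ‖deriv μ k‖ ≤ C₀ * jb x ^ 2 / jb k) (hgd : Differentiable ℝ g)
    (hg : MemLp g 2 volume) (hg' : MemLp (deriv g) 2 volume) :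
    ∫ k in Ioi 0, ‖deriv (fun k : ℝ => T k / k * (μ k * cexp (I * k * x)) * g k) k‖ ≤
      C₀ * (2 * (C₀ + 1) * jb x ^ 2) *
        (√π * (2 * √(∫ k, ‖g k‖ ^ 2) + √(∫ k, ‖deriv g k‖ ^ 2))) := by
  have hw := (integrable_inv_jb_mul_norm hg).integrableOn (s := Ioi 0)
  have hw' := (integrable_inv_jb_mul_norm hg').integrableOn (s := Ioi 0)
  calc _ ≤ ∫ k in Ioi 0, C₀ * (2 * (C₀ + 1) * jb x ^ 2) *
          (2 * ((jb k)⁻¹ * ‖g k‖) + (jb k)⁻¹ * ‖deriv g k‖) :=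
        integral_mono_of_nonneg (Eventually.of_forall fun _ => norm_nonneg _)
          (((hw.const_mul 2).add hw').const_mul _)
          ((ae_restrict_iff' measurableSet_Ioi).2 (Eventually.of_forall fun k hk =>
            norm_deriv_amplitude_le hC₀ (ne_of_gt hk) (hTd k) (hTk k (ne_of_gt hk)) (hμd k)
              (hμ1 k) (hμ' k) (hgd k)))
    _ = C₀ * (2 * (C₀ + 1) * jb x ^ 2) * (2 * (∫ k in Ioi 0, (jb k)⁻¹ * ‖g k‖) +
          ∫ k in Ioi 0, (jb k)⁻¹ * ‖deriv g k‖) := by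
        rw [integral_const_mul, integral_add (hw.const_mul 2) hw', integral_const_mul]
    _ ≤ _ := by
        have := integral_inv_jb_mul_norm_le hg (Ioi 0)
        have := integral_inv_jb_mul_norm_le hg' (Ioi 0)
        gcongr
        linarith

end Amplitude

lemma norm_integral_Ioi_le_of_norm_le_one {T μ g : ℝ → ℂ} {C₀ x t : ℝ}
    (hC₀ : 0 ≤ C₀) (hT : ∀ k, ‖T k‖ ≤ 1) (hμ1 : ∀ k, ‖μ k - 1‖ ≤ C₀ * jb x / jb k)
    (hg : MemLp g 2 volume) :
    ‖∫ k in Ioi 0, (((jb k)⁻¹ : ℝ) : ℂ) * T k * μ k * cexp (I * k * x) *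
        cexp (I * t * jb k) * g k‖ ≤
      (C₀ + 1) * jb x * (√π * √(∫ k, ‖g k‖ ^ 2)) := by
  have hbound : ∀ k, ‖(((jb k)⁻¹ : ℝ) : ℂ) * T k * μ k * cexp (I * k * x) *
      cexp (I * t * jb k) * g k‖ ≤ (C₀ + 1) * jb x * ((jb k)⁻¹ * ‖g k‖) := fun k => by
    simp only [norm_mul, norm_real, Real.norm_of_nonneg (inv_pos.2 (jb_pos k)).le,
      norm_cexp_I_mul_mul, mul_one]
    calc _ = (‖T k‖ * ‖μ k‖) * ((jb k)⁻¹ * ‖g k‖) := by ring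
      _ ≤ (1 * ((C₀ + 1) * jb x)) * ((jb k)⁻¹ * ‖g k‖) := by
        gcongr
        exacts [mul_nonneg (inv_pos.2 (jb_pos k)).le (norm_nonneg _), hT k,
          norm_le_of_norm_sub_one_le hC₀ (hμ1 k)]
      _ = _ := by ring
  calc _ ≤ ∫ k in Ioi 0, (C₀ + 1) * jb x * ((jb k)⁻¹ * ‖g k‖) :=
        norm_integral_le_of_norm_le ((integrable_inv_jb_mul_norm hg).integrableOn.const_mul _)
          (Eventually.of_forall hbound)
    _ ≤ _ := by
      rw [integral_const_mul]
      gcongr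
      · exact mul_nonneg (by linarith) (jb_pos x).le
      · exact integral_inv_jb_mul_norm_le hg _

lemma norm_integral_Ioi_le_inv_of_pos {T μ g : ℝ → ℂ} {C₀ x t : ℝ} (hC₀ : 0 ≤ C₀)
    (ht : 0 < t) (hTd : Differentiable ℝ T)
    (hTk : ∀ k : ℝ, k ≠ 0 →
      ‖T k / k‖ + jb k * ‖deriv (fun y : ℝ => T y / y) k‖ ≤ C₀ / jb k)
    (hμd : Differentiable ℝ μ) (hμ1 : ∀ k, ‖μ k - 1‖ ≤ C₀ * jb x / jb k)
    (hμ' : ∀ k, ‖deriv μ k‖ ≤ C₀ * jb x ^ 2 / jb k) (hgd : Differentiable ℝ g)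
    (hg : MemLp g 2 volume) (hg' : MemLp (deriv g) 2 volume) (hg0 : g 0 = 0) :
    ‖∫ k in Ioi 0, (((jb k)⁻¹ : ℝ) : ℂ) * T k * μ k * cexp (I * k * x) *
        cexp (I * t * jb k) * g k‖ ≤
      t⁻¹ * (C₀ * (2 * (C₀ + 1) * jb x ^ 2) *
        (√π * (2 * √(∫ k, ‖g k‖ ^ 2) + √(∫ k, ‖deriv g k‖ ^ 2)))) := by
  set u : ℝ → ℂ := fun k => T k / k * (μ k * cexp (I * k * x)) * g k
  set K := C₀ * (2 * (C₀ + 1) * jb x ^ 2)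
  have hud : ∀ k ∈ Ioi (0 : ℝ), HasDerivAt u (deriv u k) k := fun k hk =>
    ((((hTd k).div ofRealCLM.differentiableAt (ofReal_ne_zero.2 (ne_of_gt hk))).mul
      (by fun_prop)).mul (hgd k)).hasDerivAt
  have hu_le : ∀ k ∈ Ioi (0 : ℝ), ‖u k‖ ≤ K * ((jb k)⁻¹ * ‖g k‖) := fun k hk =>
    norm_amplitude_le hC₀ (hTk k (ne_of_gt hk)) (hμ1 k)
  have hu_0 : Tendsto u (𝓝[>] 0) (𝓝 0) := by
    have hw : Continuous fun k => K * ((jb k)⁻¹ * ‖g k‖) := by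
      have := hgd.continuous
      fun_prop (disch := exact fun k => (jb_pos k).ne')
    refine squeeze_zero_norm' (eventually_nhdsWithin_of_forall hu_le) ?_
    simpa [hg0] using (hw.tendsto 0).mono_left nhdsWithin_le_nhds
  have hu_top : Tendsto u atTop (𝓝 0) :=
    squeeze_zero_norm' ((eventually_gt_atTop 0).mono hu_le)
      (by simpa using (tendsto_inv_jb_mul_norm_atTop hgd hg hg').const_mul K)
  have heq : EqOn (fun k : ℝ => (((jb k)⁻¹ : ℝ) : ℂ) * T k * μ k * cexp (I * k * x) *
      cexp (I * t * jb k) * g k) (fun k => u k * ↑(k / jb k) * cexp (I * t * jb k)) (Ioi 0) :=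
    fun k hk => by
      have : (k : ℂ) ≠ 0 := ofReal_ne_zero.2 (ne_of_gt hk)
      simp only [u]; push_cast; field_simp
  rw [setIntegral_congr_fun measurableSet_Ioi heq]
  refine (norm_integral_Ioi_mul_deriv_mul_cexp_le ht.ne' hud (fun k _ => hasDerivAt_jb k)
    (integrableOn_deriv_amplitude hC₀ hTd hTk hμd hμ1 hμ' hgd hg hg')
    (integrableOn_amplitude_mul_cexp hC₀ hTd.continuous hTk hμd.continuous hμ1
      hgd.continuous hg t)
    hu_0 hu_top).trans ?_
  rw [abs_of_pos ht]
  gcongr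
  exact integral_norm_deriv_amplitude_le hC₀ hTd hTk hμd hμ1 hμ' hgd hg hg'

/-- Half-line contribution to the weighted local decay estimate: for a
transmission coefficient `T` with `|T| ≤ 1`, `|T(k)/k| + ⟨k⟩|(T(k)/k)'| ≤ C₀⟨k⟩⁻¹`,
and a modified Jost function `m` with `|m−1| ≤ C₀⟨x⟩⟨k⟩⁻¹`, `|∂_k m| ≤ C₀⟨x⟩²⟨k⟩⁻¹`,
one has `|∫₀^∞ ⟨k⟩⁻¹ T(k) m(x,k) e^{ikx} e^{it⟨k⟩} g(k) dk|
  ≤ C ⟨x⟩² ⟨t⟩⁻¹ (‖g‖_{L²} + ‖g'‖_{L²})` whenever `g(0) = 0`,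
with `C` depending only on `C₀`. -/
theorem stmt16 (C₀ : ℝ) (hC₀ : 0 ≤ C₀) :
    ∃ C : ℝ, ∀ T : ℝ → ℂ,
      (∀ k : ℝ, DifferentiableAt ℝ T k) →
      (∀ k : ℝ, ‖T k‖ ≤ 1) →
      (∀ k : ℝ, k ≠ 0 →
        ‖T k / k‖ + jb k * ‖deriv (fun y : ℝ => T y / y) k‖ ≤ C₀ / jb k) →
      ∀ m : ℝ → ℝ → ℂ, Continuous (Function.uncurry m) →
        (∀ x k : ℝ, DifferentiableAt ℝ (m x) k) →
        (∀ x k : ℝ, ‖m x k - 1‖ ≤ C₀ * jb x / jb k) →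
        (∀ x k : ℝ, ‖deriv (m x) k‖ ≤ C₀ * jb x ^ 2 / jb k) →
        ∀ g : ℝ → ℂ, (∀ k : ℝ, DifferentiableAt ℝ g k) →
          MemLp g 2 volume → MemLp (deriv g) 2 volume → g 0 = 0 →
          ∀ t : ℝ, 0 ≤ t → ∀ x : ℝ,
            ‖∫ k in Set.Ioi (0 : ℝ), (((jb k)⁻¹ : ℝ) : ℂ) * T k * m x k *
                Complex.exp (Complex.I * k * x) *
                Complex.exp (Complex.I * t * jb k) * g k‖
              ≤ C * jb x ^ 2 * (jb t)⁻¹ *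
                (Real.sqrt (∫ k : ℝ, ‖g k‖ ^ 2) +
                  Real.sqrt (∫ k : ℝ, ‖deriv g k‖ ^ 2)) := by
  refine ⟨√2 * (4 * √π * (C₀ + 1) ^ 2), ?_⟩
  intro T hTd hT1 hTk m _ hmd hm1 hm' g hgd hg hg' hg0 t ht x
  set A := √(∫ k, ‖g k‖ ^ 2)
  set B := √(∫ k, ‖deriv g k‖ ^ 2)
  have hA : 0 ≤ A := Real.sqrt_nonneg _
  have hB : 0 ≤ B := Real.sqrt_nonneg _
  have hx := jb_le_sq_jb x
  have hbound := le_sqrt_two_mul_inv_jb ht (K := 4 * √π * (C₀ + 1) ^ 2 * jb x ^ 2 * (A + B))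
    (by positivity) ((norm_integral_Ioi_le_of_norm_le_one hC₀ hT1 (hm1 x) hg).trans ?_)
    fun ht₁ => (norm_integral_Ioi_le_inv_of_pos hC₀ (one_pos.trans_le ht₁) hTd hTk (hmd x)
      (hm1 x) (hm' x) hgd hg hg' hg0).trans ?_
  · exact hbound.trans_eq (by ring)
  · calc _ = √π * ((C₀ + 1) * jb x * A) := by ring
      _ ≤ √π * ((4 * (C₀ + 1) ^ 2) * jb x ^ 2 * (A + B)) := by
          gcongr <;> nlinarith [jb_pos x]
      _ = _ := by ring
  · gcongr t⁻¹ * ?_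
    calc _ = √π * (2 * C₀ * (C₀ + 1) * jb x ^ 2 * (2 * A + B)) := by ring
      _ ≤ √π * (2 * (C₀ + 1) * (C₀ + 1) * jb x ^ 2 * (2 * (A + B))) := by
          gcongr <;> nlinarith [jb_pos x]
      _ = _ := by ring
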